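/- arXiv:1911.01882 — 2 statements merged into one kernel-verified Lean document; each statement's English description precedes it below -/
import Mathlib

section
/- Let γ : ℝ → U be a smooth, injective, proper curve with g-unit speed (γ̇(s)ᵀ g(γ(s)) γ̇(s) = 1 for all s ∈ ℝ) and image C = γ(ℝ). Then C is a strict normal mode of the dynamics Dq̇ = ∇f(q) if and only if (a) γ is a geodesic, i.e. (Dγ̇)(s) = 0 for all s ∈ ℝ, and (b) for every s ∈ ℝ the gradient ∇f(γ(s)) lies in the span of γ̇(s). -/
/-!
If `TC` is invariant, the solution through `(γ s, v • γ̇ s)` stays on `C`, hence is locally a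
`C²` reparametrisation `γ ∘ S`, and the chain rule `D(γ ∘ S)˙ = S̈ γ̇ + Ṡ² Dγ̇` gives
`∇f(γ s) ∈ ℝ γ̇ s + v² Dγ̇ s` for every `v`. Taking `v = 0` gives (b); taking `v = 1` puts `Dγ̇` in
the span of `γ̇`, while metric compatibility `d/ds g(γ̇, γ̇) = 2 g(Dγ̇, γ̇)` and unit speed make
`Dγ̇` `g`-orthogonal to `γ̇`, so `Dγ̇ = 0`.

Conversely, if `γ` is a geodesic and `∇f(γ s) = α s • γ̇ s`, then for every solution of the scalar
equation `σ̈ = α(σ)` the curve `γ ∘ σ` solves the dynamics and lies in `TC`. By uniqueness for the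
first-order system in phase space, the times at which a solution lies in `TC` form an open set;
this set is also closed in the interval of definition because `TC` is closed (`γ` is a proper
injective immersion), so it is the whole interval.
-/

open Matrix

/-- Partial derivative in direction `i` of a scalar function on `ℝⁿ`. -/
noncomputable def pd {n : ℕ} (i : Fin n) (h : (Fin n → ℝ) → ℝ) (x : Fin n → ℝ) : ℝ :=
  fderiv ℝ h x (Pi.single i 1)

/-- Christoffel symbols `Γᵏᵢⱼ` of the Levi-Civita connection of the metric `g`
in local coordinates. -/
noncomputable def christoffel {n : ℕ} (g : (Fin n → ℝ) → Matrix (Fin n) (Fin n) ℝ)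
    (k i j : Fin n) (x : Fin n → ℝ) : ℝ :=
  (1 / 2) * ∑ l, (g x)⁻¹ k l *
    (pd i (fun y => g y j l) x + pd j (fun y => g y i l) x - pd l (fun y => g y i j) x)

/-- Covariant acceleration `(Dq̇)ᵏ(t) = q̈ᵏ(t) + Σᵢⱼ Γᵏᵢⱼ(q(t)) q̇ⁱ(t) q̇ʲ(t)` of a curve. -/
noncomputable def covAccel {n : ℕ} (g : (Fin n → ℝ) → Matrix (Fin n) (Fin n) ℝ)
    (q : ℝ → Fin n → ℝ) (t : ℝ) : Fin n → ℝ :=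
  fun k => deriv (deriv q) t k +
    ∑ i, ∑ j, christoffel g k i j (q t) * deriv q t i * deriv q t j

/-- The `g`-gradient `(∇f)ᵏ(x) = Σⱼ (g(x)⁻¹)ᵏʲ ∂ⱼf(x)` of a scalar function `f`. -/
noncomputable def gGrad {n : ℕ} (g : (Fin n → ℝ) → Matrix (Fin n) (Fin n) ℝ)
    (f : (Fin n → ℝ) → ℝ) (x : Fin n → ℝ) : Fin n → ℝ :=
  fun k => ∑ j, (g x)⁻¹ k j * pd j f x

/-- `q` is a `C²` solution of the dynamics `Dq̇ = ∇f(q)` on the set `I`, staying in `U`. -/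
def IsSolutionOn {n : ℕ} (g : (Fin n → ℝ) → Matrix (Fin n) (Fin n) ℝ)
    (f : (Fin n → ℝ) → ℝ) (U : Set (Fin n → ℝ)) (q : ℝ → Fin n → ℝ) (I : Set ℝ) : Prop :=
  ContDiffOn ℝ 2 q I ∧ (∀ t ∈ I, q t ∈ U) ∧ ∀ t ∈ I, covAccel g q t = gGrad g f (q t)

/-- The tangent bundle `TC = {(γ(s), v·γ̇(s)) : s, v ∈ ℝ}` of the curve `C = γ(ℝ)`. -/
def TangentBundleOf {n : ℕ} (γ : ℝ → Fin n → ℝ) : Set ((Fin n → ℝ) × (Fin n → ℝ)) :=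
  {p | ∃ s v : ℝ, p.1 = γ s ∧ p.2 = v • deriv γ s}

/-- `C = γ(ℝ)` is a strict normal mode of the dynamics `Dq̇ = ∇f(q)`: its tangent bundle
is an invariant set, i.e. every `C²` solution starting (at some time `t₀` of its open
interval of definition) on the tangent bundle of the curve remains on it. -/
def IsStrictNormalMode {n : ℕ} (g : (Fin n → ℝ) → Matrix (Fin n) (Fin n) ℝ)
    (f : (Fin n → ℝ) → ℝ) (U : Set (Fin n → ℝ)) (γ : ℝ → Fin n → ℝ) : Prop :=
  ∀ I : Set ℝ, IsOpen I → I.OrdConnected → ∀ q : ℝ → Fin n → ℝ, IsSolutionOn g f U q I →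
    ∀ t₀ ∈ I, (q t₀, deriv q t₀) ∈ TangentBundleOf γ →
      ∀ t ∈ I, (q t, deriv q t) ∈ TangentBundleOf γ

open Set Filter Topology
open scoped ContDiff

section Smoothness

variable {E ι : Type*} [NormedAddCommGroup E] [NormedSpace ℝ E] [Fintype ι] [DecidableEq ι]
  {s : Set E} {k : WithTop ℕ∞}

lemma contDiffOn_det {M : E → Matrix ι ι ℝ} (hM : ∀ i j, ContDiffOn ℝ k (fun x => M x i j) s) :
    ContDiffOn ℝ k (fun x => (M x).det) s := by
  simp only [Matrix.det_apply']
  exact ContDiffOn.sum fun σ _ => contDiffOn_const.mul (contDiffOn_prod fun i _ => hM (σ i) i)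

lemma contDiffOn_inv_apply {M : E → Matrix ι ι ℝ}
    (hM : ∀ i j, ContDiffOn ℝ k (fun x => M x i j) s) (hdet : ∀ x ∈ s, (M x).det ≠ 0) (i j : ι) :
    ContDiffOn ℝ k (fun x => (M x)⁻¹ i j) s := by
  simp only [Matrix.inv_def, Matrix.smul_apply, Ring.inverse_eq_inv', smul_eq_mul,
    Matrix.adjugate_apply]
  refine ((contDiffOn_det hM).inv hdet).mul (contDiffOn_det fun a b => ?_)
  simp only [Matrix.updateRow_apply]
  split_ifs
  exacts [contDiffOn_const, hM a b]

end Smoothness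

section Coefficients

variable {n : ℕ} {U : Set (Fin n → ℝ)} {g : (Fin n → ℝ) → Matrix (Fin n) (Fin n) ℝ}

lemma ContDiffOn.pd (hU : IsOpen U) {h : (Fin n → ℝ) → ℝ} (hh : ContDiffOn ℝ ∞ h U) (i : Fin n) :
    ContDiffOn ℝ ∞ (pd i h) U :=
  (hh.fderiv_of_isOpen hU (by simp)).clm_apply contDiffOn_const

variable (hU : IsOpen U) (hg : ∀ i j, ContDiffOn ℝ ∞ (fun x => g x i j) U)
  (hdet : ∀ x ∈ U, (g x).det ≠ 0)
include hU hg hdet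

lemma contDiffOn_christoffel (k i j : Fin n) : ContDiffOn ℝ ∞ (christoffel g k i j) U :=
  contDiffOn_const.mul <| ContDiffOn.sum fun l _ => (contDiffOn_inv_apply hg hdet k l).mul
    ((((hg j l).pd hU i).add ((hg i l).pd hU j)).sub ((hg i j).pd hU l))

lemma contDiffOn_gGrad {f : (Fin n → ℝ) → ℝ} (hf : ContDiffOn ℝ ∞ f U) (k : Fin n) :
    ContDiffOn ℝ ∞ (fun x => gGrad g f x k) U :=
  ContDiffOn.sum fun j _ => (contDiffOn_inv_apply hg hdet k j).mul (hf.pd hU j)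

end Coefficients

section Calculus

variable {E : Type*} [NormedAddCommGroup E] [NormedSpace ℝ E] {q : ℝ → E} {t : ℝ}

lemma ContDiffAt.eventually_hasDerivAt (h : ContDiffAt ℝ 2 q t) :
    ∀ᶠ u in 𝓝 t, HasDerivAt q (deriv q u) u :=
  (h.eventually (by simp)).mono fun _ hu => (hu.differentiableAt (by simp)).hasDerivAt

lemma ContDiffAt.hasDerivAt_deriv (h : ContDiffAt ℝ 2 q t) :
    HasDerivAt (deriv q) (deriv (deriv q) t) t :=
  ((h.derivWithin (m := 1) (by norm_num)).differentiableAt one_ne_zero).hasDerivAt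

lemma hasDerivAt_smul_deriv_comp (hq : ContDiff ℝ 2 q) {σ ν : ℝ → ℝ} {a : ℝ}
    (hσ : HasDerivAt σ (ν t) t) (hν : HasDerivAt ν a t) :
    HasDerivAt (fun u => ν u • deriv q (σ u))
      (a • deriv q (σ t) + ν t ^ 2 • deriv (deriv q) (σ t)) t := by
  have hq' := ((hq.differentiable_deriv_two (σ t)).hasDerivAt).scomp t hσ
  refine (hν.smul hq').congr_deriv ?_
  rw [smul_smul, sq, add_comm]
  rfl

end Calculus

section CovariantAcceleration

variable {n : ℕ} (g : (Fin n → ℝ) → Matrix (Fin n) (Fin n) ℝ)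

noncomputable def christoffelQuad (x w : Fin n → ℝ) : Fin n → ℝ :=
  fun k => ∑ i, ∑ j, christoffel g k i j x * w i * w j

lemma covAccel_eq_add_christoffelQuad (q : ℝ → Fin n → ℝ) (t : ℝ) :
    covAccel g q t = deriv (deriv q) t + christoffelQuad g (q t) (deriv q t) := rfl

lemma christoffelQuad_smul (x w : Fin n → ℝ) (c : ℝ) :
    christoffelQuad g x (c • w) = c ^ 2 • christoffelQuad g x w := by
  ext k
  simp only [christoffelQuad, Pi.smul_apply, smul_eq_mul, Finset.mul_sum]
  exact Finset.sum_congr rfl fun i _ => Finset.sum_congr rfl fun j _ => by ring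

variable {g}

lemma Filter.EventuallyEq.covAccel_eq {q r : ℝ → Fin n → ℝ} {t : ℝ} (h : q =ᶠ[𝓝 t] r) :
    covAccel g q t = covAccel g r t := by
  simp only [covAccel_eq_add_christoffelQuad, h.deriv.deriv_eq, h.deriv.eq_of_nhds, h.eq_of_nhds]

lemma covAccel_comp {γ : ℝ → Fin n → ℝ} (hγ : ContDiff ℝ 2 γ) {σ : ℝ → ℝ} {t : ℝ}
    (hσ : ContDiffAt ℝ 2 σ t) :
    covAccel g (γ ∘ σ) t =
      deriv (deriv σ) t • deriv γ (σ t) + deriv σ t ^ 2 • covAccel g γ (σ t) := by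
  have hγd : Differentiable ℝ γ := hγ.differentiable (by simp)
  have hd : deriv (γ ∘ σ) =ᶠ[𝓝 t] fun u => deriv σ u • deriv γ (σ u) :=
    hσ.eventually_hasDerivAt.mono fun u hu => ((hγd (σ u)).hasDerivAt.scomp u hu).deriv
  have hdd := (hasDerivAt_smul_deriv_comp hγ hσ.eventually_hasDerivAt.self_of_nhds
    hσ.hasDerivAt_deriv).deriv
  rw [covAccel_eq_add_christoffelQuad, covAccel_eq_add_christoffelQuad, hd.deriv_eq, hdd,
    hd.eq_of_nhds, Function.comp_apply, christoffelQuad_smul, smul_add, add_assoc]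

end CovariantAcceleration

section MetricCompatibility

lemma Finset.sum_sum_sum_rotate {ι M : Type*} [Fintype ι] [AddCommMonoid M] (F : ι → ι → ι → M) :
    ∑ a, ∑ b, ∑ c, F a b c = ∑ b, ∑ c, ∑ a, F a b c := by
  rw [Finset.sum_comm]
  exact Finset.sum_congr rfl fun _ _ => Finset.sum_comm

lemma hasDerivAt_dotProduct_mulVec {ι : Type*} [Fintype ι] {v w : ℝ → ι → ℝ}
    {M : ℝ → Matrix ι ι ℝ} {v' w' : ι → ℝ} {M' : Matrix ι ι ℝ} {t : ℝ}
    (hv : HasDerivAt v v' t) (hM : ∀ i j, HasDerivAt (fun u => M u i j) (M' i j) t)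
    (hw : HasDerivAt w w' t) :
    HasDerivAt (fun u => v u ⬝ᵥ M u *ᵥ w u)
      (v' ⬝ᵥ M t *ᵥ w t + v t ⬝ᵥ M' *ᵥ w t + v t ⬝ᵥ M t *ᵥ w') t := by
  have hvi i := hasDerivAt_pi.mp hv i
  have hwj j := hasDerivAt_pi.mp hw j
  simp only [dotProduct, Matrix.mulVec]
  refine (HasDerivAt.fun_sum (u := Finset.univ) fun i _ => (hvi i).fun_mul
    (HasDerivAt.fun_sum (u := Finset.univ) fun j _ => (hM i j).fun_mul (hwj j))).congr_deriv ?_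
  simp only [Finset.sum_add_distrib, mul_add, Finset.mul_sum]
  ring

variable {n : ℕ} {g : (Fin n → ℝ) → Matrix (Fin n) (Fin n) ℝ}

lemma fderiv_apply_eq_sum_pd (h : (Fin n → ℝ) → ℝ) (x w : Fin n → ℝ) :
    fderiv ℝ h x w = ∑ l, w l * pd l h x := by
  conv_lhs => rw [pi_eq_sum_univ' w]
  simp [map_sum, pd]

lemma christoffelQuad_dotProduct_mulVec {x : Fin n → ℝ} (hsymm : (g x).IsSymm)
    (hdet : IsUnit (g x).det) (w : Fin n → ℝ) :
    christoffelQuad g x w ⬝ᵥ g x *ᵥ w =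
      (1 / 2) * (w ⬝ᵥ Matrix.of (fun i j => fderiv ℝ (fun y => g y i j) x w) *ᵥ w) := by
  -- `Γ(w, w) = ½ g⁻¹ b` with `b` the lowered Christoffel form, so pairing with `g w` cancels
  -- `g⁻¹`; each of the three cubic sums making up `b ⬝ᵥ w` is a relabelling of `K`.
  set P : Fin n → Fin n → Fin n → ℝ := fun a b c => pd a (fun y => g y b c) x
  set b : Fin n → ℝ := fun l => ∑ i, ∑ j, (P i j l + P j i l - P l i j) * w i * w j
  set K := ∑ a, ∑ b, ∑ c, P a b c * (w a * w b * w c)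
  have hquad : christoffelQuad g x w = (1 / 2 : ℝ) • ((g x)⁻¹ *ᵥ b) := by
    ext k
    simp only [christoffelQuad, christoffel, b, Pi.smul_apply, smul_eq_mul, Matrix.mulVec,
      dotProduct, Finset.mul_sum, Finset.sum_mul]
    symm
    rw [Finset.sum_comm]
    refine Finset.sum_congr rfl fun i _ => ?_
    rw [Finset.sum_comm]
    exact Finset.sum_congr rfl fun j _ => Finset.sum_congr rfl fun l _ => by ring
  have hcancel : (g x)⁻¹ *ᵥ b ⬝ᵥ g x *ᵥ w = b ⬝ᵥ w := by
    rw [dotProduct_mulVec, ← Matrix.mulVec_transpose, hsymm.eq, Matrix.mulVec_mulVec,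
      Matrix.mul_nonsing_inv _ hdet, Matrix.one_mulVec]
  have hrot : ∑ l, ∑ i, ∑ j, P i j l * (w i * w j * w l) = K := Finset.sum_sum_sum_rotate _
  have hswap : ∑ l, ∑ i, ∑ j, P j i l * (w i * w j * w l) = K := by
    rw [Finset.sum_sum_sum_rotate, Finset.sum_comm]
    exact Finset.sum_congr rfl fun a _ => Finset.sum_congr rfl fun b _ =>
      Finset.sum_congr rfl fun c _ => by ring
  have hlast : ∑ l, ∑ i, ∑ j, P l i j * (w i * w j * w l) = K :=
    Finset.sum_congr rfl fun a _ => Finset.sum_congr rfl fun b _ =>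
      Finset.sum_congr rfl fun c _ => by ring
  have hcubic : b ⬝ᵥ w = K := calc
    b ⬝ᵥ w = ∑ l, ∑ i, ∑ j, P i j l * (w i * w j * w l) +
        ∑ l, ∑ i, ∑ j, P j i l * (w i * w j * w l) -
          ∑ l, ∑ i, ∑ j, P l i j * (w i * w j * w l) := by
      simp only [b, dotProduct, Finset.sum_mul, ← Finset.sum_add_distrib, ← Finset.sum_sub_distrib]
      exact Finset.sum_congr rfl fun l _ => Finset.sum_congr rfl fun i _ =>
        Finset.sum_congr rfl fun j _ => by ring
    _ = K := by rw [hrot, hswap, hlast]; ring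
  have hK : w ⬝ᵥ Matrix.of (fun i j => fderiv ℝ (fun y => g y i j) x w) *ᵥ w = K := by
    simp only [K, P, dotProduct, Matrix.mulVec, Matrix.of_apply, fderiv_apply_eq_sum_pd,
      Finset.mul_sum, Finset.sum_mul]
    rw [← Finset.sum_sum_sum_rotate]
    exact Finset.sum_congr rfl fun a _ => Finset.sum_congr rfl fun b _ =>
      Finset.sum_congr rfl fun c _ => by ring
  rw [hquad, smul_dotProduct, hcancel, hcubic, hK, smul_eq_mul]

variable {γ : ℝ → Fin n → ℝ} {s : ℝ}

lemma hasDerivAt_dotProduct_mulVec_deriv (hγ : ContDiffAt ℝ 2 γ s)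
    (hg : ∀ i j, DifferentiableAt ℝ (fun y => g y i j) (γ s))
    (hsymm : (g (γ s)).IsSymm) (hdet : IsUnit (g (γ s)).det) :
    HasDerivAt (fun u => deriv γ u ⬝ᵥ g (γ u) *ᵥ deriv γ u)
      (2 * (covAccel g γ s ⬝ᵥ g (γ s) *ᵥ deriv γ s)) s := by
  have hγ' := hγ.eventually_hasDerivAt.self_of_nhds
  refine (hasDerivAt_dotProduct_mulVec (M := fun u => g (γ u))
    (M' := Matrix.of fun i j => fderiv ℝ (fun y => g y i j) (γ s) (deriv γ s))
    hγ.hasDerivAt_deriv (fun i j => (hg i j).hasFDerivAt.comp_hasDerivAt s hγ')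
    hγ.hasDerivAt_deriv).congr_deriv ?_
  have hcomm : deriv γ s ⬝ᵥ g (γ s) *ᵥ deriv (deriv γ) s =
      deriv (deriv γ) s ⬝ᵥ g (γ s) *ᵥ deriv γ s := by
    rw [dotProduct_mulVec, ← Matrix.mulVec_transpose, hsymm.eq, dotProduct_comm]
  rw [covAccel_eq_add_christoffelQuad, add_dotProduct,
    christoffelQuad_dotProduct_mulVec hsymm hdet, hcomm]
  ring

lemma covAccel_dotProduct_mulVec_deriv_eq_zero (hγ : ContDiffAt ℝ 2 γ s)
    (hg : ∀ i j, DifferentiableAt ℝ (fun y => g y i j) (γ s))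
    (hsymm : (g (γ s)).IsSymm) (hdet : IsUnit (g (γ s)).det)
    (hunit : ∀ u, deriv γ u ⬝ᵥ g (γ u) *ᵥ deriv γ u = 1) :
    covAccel g γ s ⬝ᵥ g (γ s) *ᵥ deriv γ s = 0 := by
  have h := hasDerivAt_dotProduct_mulVec_deriv hγ hg hsymm hdet
  simp only [hunit] at h
  linarith [h.unique (hasDerivAt_const s 1)]

end MetricCompatibility

section TangentBundle

lemma exists_eq_smul_of_tendsto_smul {E ι : Type*} [NormedAddCommGroup E] [NormedSpace ℝ E]
    {l : Filter ι} [l.NeBot] {c : ι → ℝ} {w : ι → E} {w₀ p : E} (hw : Tendsto w l (𝓝 w₀))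
    (hw₀ : w₀ ≠ 0) (hp : Tendsto (fun k => c k • w k) l (𝓝 p)) : ∃ c₀ : ℝ, p = c₀ • w₀ := by
  obtain ⟨φ, hφ⟩ := SeparatingDual.exists_ne_zero (R := ℝ) hw₀
  have hφw : Tendsto (fun k => φ (w k)) l (𝓝 (φ w₀)) := (φ.continuous.tendsto w₀).comp hw
  have hc : Tendsto c l (𝓝 (φ p / φ w₀)) := by
    refine (((φ.continuous.tendsto p).comp hp).div hφw hφ).congr' ?_
    filter_upwards [hφw.eventually_ne hφ] with k hk
    simp [hk]
  exact ⟨_, tendsto_nhds_unique hp (hc.smul hw)⟩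

lemma ne_zero_of_dotProduct_mulVec_eq_one {ι : Type*} [Fintype ι] {w : ι → ℝ}
    {M : Matrix ι ι ℝ} (h : w ⬝ᵥ M *ᵥ w = 1) : w ≠ 0 := by
  rintro rfl
  simp at h

variable {n : ℕ} {γ : ℝ → Fin n → ℝ}

lemma isClosed_tangentBundleOf (hγ : IsClosedEmbedding γ) (hγ' : Continuous (deriv γ))
    (hne : ∀ s, deriv γ s ≠ 0) : IsClosed (TangentBundleOf γ) := by
  refine IsSeqClosed.isClosed fun z z₀ hz hlim => ?_
  choose s c hx hp using hz
  have hx' : Tendsto (γ ∘ s) atTop (𝓝 z₀.1) := by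
    simpa only [Function.comp_def, ← hx] using (continuous_fst.tendsto _).comp hlim
  obtain ⟨s₀, hs₀⟩ : z₀.1 ∈ range γ :=
    hγ.isClosed_range.mem_of_tendsto hx' (Eventually.of_forall fun k => mem_range_self _)
  have hs : Tendsto s atTop (𝓝 s₀) := hγ.isEmbedding.tendsto_nhds_iff.mpr (hs₀ ▸ hx')
  have hp' : Tendsto (fun k => c k • (deriv γ ∘ s) k) atTop (𝓝 z₀.2) := by
    simpa only [Function.comp_def, ← hp] using (continuous_snd.tendsto _).comp hlim
  obtain ⟨c₀, hc₀⟩ := exists_eq_smul_of_tendsto_smul ((hγ'.tendsto s₀).comp hs) (hne s₀) hp'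
  exact ⟨s₀, c₀, hs₀.symm, hc₀⟩

end TangentBundle

section PhaseSpace

lemma HasDerivAt.fst {E F : Type*} [NormedAddCommGroup E] [NormedSpace ℝ E]
    [NormedAddCommGroup F] [NormedSpace ℝ F] {y : ℝ → E × F} {y' : E × F} {t : ℝ}
    (h : HasDerivAt y y' t) : HasDerivAt (fun u => (y u).1) y'.1 t :=
  (hasFDerivAt_fst (𝕜 := ℝ) (p := y t)).comp_hasDerivAt t h

lemma HasDerivAt.snd {E F : Type*} [NormedAddCommGroup E] [NormedSpace ℝ E]
    [NormedAddCommGroup F] [NormedSpace ℝ F] {y : ℝ → E × F} {y' : E × F} {t : ℝ}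
    (h : HasDerivAt y y' t) : HasDerivAt (fun u => (y u).2) y'.2 t :=
  (hasFDerivAt_snd (𝕜 := ℝ) (p := y t)).comp_hasDerivAt t h

lemma ContDiffAt.eventuallyEq_of_hasDerivAt {E : Type*} [NormedAddCommGroup E]
    [NormedSpace ℝ E] {F : E → E} {y₁ y₂ : ℝ → E} {t₀ : ℝ} (hF : ContDiffAt ℝ 1 F (y₁ t₀))
    (h₁ : ∀ᶠ t in 𝓝 t₀, HasDerivAt y₁ (F (y₁ t)) t)
    (h₂ : ∀ᶠ t in 𝓝 t₀, HasDerivAt y₂ (F (y₂ t)) t) (h : y₁ t₀ = y₂ t₀) :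
    y₁ =ᶠ[𝓝 t₀] y₂ := by
  obtain ⟨K, s, hs, hK⟩ := hF.exists_lipschitzOnWith
  have hs₁ : ∀ᶠ t in 𝓝 t₀, y₁ t ∈ s := h₁.self_of_nhds.continuousAt.preimage_mem_nhds hs
  have hs₂ : ∀ᶠ t in 𝓝 t₀, y₂ t ∈ s :=
    h₂.self_of_nhds.continuousAt.preimage_mem_nhds (h ▸ hs)
  exact ODE_solution_unique_of_eventually (v := fun _ => F) (s := fun _ => s)
    (Eventually.of_forall fun _ => hK) (h₁.and hs₁) (h₂.and hs₂) h

variable {n : ℕ} {U : Set (Fin n → ℝ)} {g : (Fin n → ℝ) → Matrix (Fin n) (Fin n) ℝ}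
  {f : (Fin n → ℝ) → ℝ}

variable (g f) in
noncomputable def phaseField (z : (Fin n → ℝ) × (Fin n → ℝ)) : (Fin n → ℝ) × (Fin n → ℝ) :=
  (z.2, gGrad g f z.1 - christoffelQuad g z.1 z.2)

lemma IsSolutionOn.hasDerivAt_phaseField {q : ℝ → Fin n → ℝ} {I : Set ℝ} (hI : IsOpen I)
    (hq : IsSolutionOn g f U q I) {t : ℝ} (ht : t ∈ I) :
    HasDerivAt (fun u => (q u, deriv q u)) (phaseField g f (q t, deriv q t)) t := by
  have hq2 := hq.1.contDiffAt (hI.mem_nhds ht)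
  refine hq2.eventually_hasDerivAt.self_of_nhds.prodMk (hq2.hasDerivAt_deriv.congr_deriv ?_)
  rw [← add_sub_cancel_right (deriv (deriv q) t) (christoffelQuad g (q t) (deriv q t)),
    ← covAccel_eq_add_christoffelQuad, hq.2.2 t ht]

section
variable (hU : IsOpen U) (hg : ∀ i j, ContDiffOn ℝ ∞ (fun x => g x i j) U)
  (hdet : ∀ x ∈ U, (g x).det ≠ 0) (hf : ContDiffOn ℝ ∞ f U)
include hU hg hdet hf

lemma contDiffOn_phaseField : ContDiffOn ℝ ∞ (phaseField g f) (U ×ˢ univ) := by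
  have hfst : MapsTo Prod.fst (U ×ˢ (univ : Set (Fin n → ℝ))) U := fun _ hz => hz.1
  refine contDiffOn_snd.prodMk (ContDiffOn.sub ?_ ?_) <;> refine contDiffOn_pi.mpr fun k => ?_
  · exact (contDiffOn_gGrad hU hg hdet hf k).comp contDiffOn_fst hfst
  · exact ContDiffOn.sum fun i _ => ContDiffOn.sum fun j _ =>
      (((contDiffOn_christoffel hU hg hdet k i j).comp contDiffOn_fst hfst).mul
        ((contDiff_apply ℝ ℝ i).comp contDiff_snd).contDiffOn).mul
        ((contDiff_apply ℝ ℝ j).comp contDiff_snd).contDiffOn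

lemma contDiffAt_phaseField {z : (Fin n → ℝ) × (Fin n → ℝ)} (hz : z.1 ∈ U) :
    ContDiffAt ℝ 1 (phaseField g f) z :=
  ((contDiffOn_phaseField hU hg hdet hf).contDiffAt
    ((hU.prod isOpen_univ).mem_nhds ⟨hz, trivial⟩)).of_le (by simp)

lemma isSolutionOn_of_hasDerivAt_phaseField {y : ℝ → (Fin n → ℝ) × (Fin n → ℝ)} {J : Set ℝ}
    (hJ : IsOpen J) (hy : ∀ t ∈ J, HasDerivAt y (phaseField g f (y t)) t)
    (hyU : ∀ t ∈ J, (y t).1 ∈ U) :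
    IsSolutionOn g f U (fun u => (y u).1) J ∧ ∀ t ∈ J, deriv (fun u => (y u).1) t = (y t).2 := by
  have hq' : EqOn (deriv fun u => (y u).1) (fun t => (y t).2) J := fun t ht =>
    (hy t ht).fst.deriv
  have hy1 : ContDiffOn ℝ 1 y J := by
    rw [show (1 : WithTop ℕ∞) = 0 + 1 from rfl, contDiffOn_succ_iff_deriv_of_isOpen hJ]
    refine ⟨fun t ht => (hy t ht).differentiableAt.differentiableWithinAt, by simp, ?_⟩
    exact contDiffOn_zero.mpr <| ((contDiffOn_phaseField hU hg hdet hf).continuousOn.comp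
      (fun t ht => (hy t ht).continuousAt.continuousWithinAt) fun t ht => ⟨hyU t ht, trivial⟩
      ).congr fun t ht => (hy t ht).deriv
  have hq2 : ContDiffOn ℝ 2 (fun u => (y u).1) J := by
    rw [show (2 : WithTop ℕ∞) = 1 + 1 from rfl, contDiffOn_succ_iff_deriv_of_isOpen hJ]
    exact ⟨fun t ht => (hy t ht).fst.differentiableAt.differentiableWithinAt, by simp,
      (contDiff_snd.comp_contDiffOn hy1).congr hq'⟩
  refine ⟨⟨hq2, hyU, fun t ht => ?_⟩, hq'⟩
  have hq'' : deriv (deriv fun u => (y u).1) t = (phaseField g f (y t)).2 := by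
    rw [(hq'.eventuallyEq_of_mem (hJ.mem_nhds ht)).deriv_eq]
    exact (hy t ht).snd.deriv
  rw [covAccel_eq_add_christoffelQuad, hq'', hq' ht]
  exact sub_add_cancel _ _

lemma exists_isSolutionOn {x₀ p₀ : Fin n → ℝ} (hx₀ : x₀ ∈ U) :
    ∃ (q : ℝ → Fin n → ℝ) (J : Set ℝ), IsOpen J ∧ J.OrdConnected ∧ (0 : ℝ) ∈ J ∧
      IsSolutionOn g f U q J ∧ q 0 = x₀ ∧ deriv q 0 = p₀ := by
  obtain ⟨y, hy₀, ε, hε, hy⟩ := (contDiffAt_phaseField hU hg hdet hf (z := (x₀, p₀)) hx₀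
    ).exists_forall_mem_closedBall_exists_eq_forall_mem_Ioo_hasDerivAt₀ 0
  have hIoo : Ioo (0 - ε) (0 + ε) ∈ 𝓝 (0 : ℝ) := Ioo_mem_nhds (by linarith) (by linarith)
  have hyU : ∀ᶠ t in 𝓝 (0 : ℝ), (y t).1 ∈ U :=
    (hy 0 (mem_of_mem_nhds hIoo)).continuousAt.fst.preimage_mem_nhds
      (hU.mem_nhds (by rw [hy₀]; exact hx₀))
  obtain ⟨δ, hδ, hball⟩ := Metric.eventually_nhds_iff_ball.mp (hyU.and hIoo)
  obtain ⟨hsol, hderiv⟩ := isSolutionOn_of_hasDerivAt_phaseField hU hg hdet hf Metric.isOpen_ball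
    (fun t ht => hy t (hball t ht).2) fun t ht => (hball t ht).1
  have h₀ : (0 : ℝ) ∈ Metric.ball 0 δ := Metric.mem_ball_self hδ
  refine ⟨_, _, Metric.isOpen_ball, ?_, h₀, hsol, by simp [hy₀], by simp [hderiv 0 h₀, hy₀]⟩
  rw [Real.ball_eq_Ioo]
  exact ordConnected_Ioo

end

end PhaseSpace

section Forward

lemma exists_contDiffAt_eventuallyEq_comp {E : Type*} [NormedAddCommGroup E] [NormedSpace ℝ E]
    {γ q : ℝ → E} {s₀ t₀ : ℝ} (hγ : ContDiff ℝ 2 γ) (hemb : IsEmbedding γ)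
    (hne : deriv γ s₀ ≠ 0) (hq : ContDiffAt ℝ 2 q t₀) (hq₀ : q t₀ = γ s₀)
    (hrange : ∀ᶠ t in 𝓝 t₀, q t ∈ range γ) :
    ∃ S : ℝ → ℝ, ContDiffAt ℝ 2 S t₀ ∧ S t₀ = s₀ ∧ q =ᶠ[𝓝 t₀] γ ∘ S := by
  obtain ⟨φ, hφ⟩ := SeparatingDual.exists_ne_zero (R := ℝ) hne
  have hψ : ContDiffAt ℝ 2 (φ ∘ γ) s₀ := (φ.contDiff.comp hγ).contDiffAt
  have hψ' : HasFDerivAt (φ ∘ γ) (ContinuousLinearEquiv.unitsEquivAut ℝ (Units.mk0 _ hφ) :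
      ℝ →L[ℝ] ℝ) s₀ :=
    (φ.hasFDerivAt.comp_hasDerivAt s₀
      ((hγ.differentiable (by simp) s₀).hasDerivAt)).hasFDerivAt_equiv hφ
  set ψinv := hψ.localInverse hψ' two_ne_zero
  have hleft : ∀ᶠ s in 𝓝 s₀, ψinv (φ (γ s)) = s :=
    (hψ.hasStrictFDerivAt' hψ' two_ne_zero).eventually_left_inverse
  -- Points of `range γ` near `γ s₀` have parameters near `s₀`, since `γ` is an embedding.
  obtain ⟨W, hW, hWleft⟩ := mem_comap.mp (hemb.isInducing.nhds_eq_comap s₀ ▸ hleft)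
  refine ⟨ψinv ∘ φ ∘ q, ?_, by simp [hq₀, hleft.self_of_nhds], ?_⟩
  · have hψinv : ContDiffAt ℝ 2 ψinv (φ (q t₀)) := hq₀ ▸ hψ.to_localInverse hψ' two_ne_zero
    exact hψinv.comp t₀ (φ.contDiff.contDiffAt.comp t₀ hq)
  · filter_upwards [hrange, hq.continuousAt.preimage_mem_nhds (hq₀ ▸ hW)] with t ⟨s, hs⟩ ht
    have hsW : γ s ∈ W := hs ▸ ht
    have hinv : ψinv (φ (γ s)) = s := hWleft hsW
    simp only [Function.comp_apply, ← hs, hinv]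

variable {n : ℕ} {U : Set (Fin n → ℝ)} {g : (Fin n → ℝ) → Matrix (Fin n) (Fin n) ℝ}
  {f : (Fin n → ℝ) → ℝ} {γ : ℝ → Fin n → ℝ}

lemma IsStrictNormalMode.exists_gGrad_eq (hNM : IsStrictNormalMode g f U γ) (hU : IsOpen U)
    (hg : ∀ i j, ContDiffOn ℝ ∞ (fun x => g x i j) U) (hdet : ∀ x ∈ U, (g x).det ≠ 0)
    (hf : ContDiffOn ℝ ∞ f U) (hγ : ContDiff ℝ 2 γ) (hemb : IsEmbedding γ) {s₀ : ℝ}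
    (hs₀ : γ s₀ ∈ U) (hne : deriv γ s₀ ≠ 0) (v : ℝ) :
    ∃ c : ℝ, gGrad g f (γ s₀) = c • deriv γ s₀ + v ^ 2 • covAccel g γ s₀ := by
  obtain ⟨q, J, hJ, hJc, h₀, hq, hq₀, hq₀'⟩ :=
    exists_isSolutionOn hU hg hdet hf (p₀ := v • deriv γ s₀) hs₀
  have hTC := hNM J hJ hJc q hq 0 h₀ ⟨s₀, v, hq₀, hq₀'⟩
  have hrange : ∀ᶠ t in 𝓝 0, q t ∈ range γ := by
    filter_upwards [hJ.mem_nhds h₀] with t ht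
    obtain ⟨s, -, hs, -⟩ := hTC t ht
    exact ⟨s, hs.symm⟩
  obtain ⟨S, hS, hS₀, hqS⟩ :=
    exists_contDiffAt_eventuallyEq_comp hγ hemb hne (hq.1.contDiffAt (hJ.mem_nhds h₀)) hq₀ hrange
  have hS' : deriv S 0 = v := smul_left_injective ℝ hne <| show deriv S 0 • _ = v • _ by
    rw [← hS₀, ← deriv.scomp 0 ((hγ.differentiable (by simp)) _) (hS.differentiableAt (by simp)),
      ← hqS.deriv_eq, hq₀', hS₀]
  refine ⟨deriv (deriv S) 0, ?_⟩
  rw [← hq₀, ← hq.2.2 0 h₀, hqS.covAccel_eq, covAccel_comp hγ hS, hS₀, hS']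

end Forward

section Reverse

variable {n : ℕ} {U : Set (Fin n → ℝ)} {g : (Fin n → ℝ) → Matrix (Fin n) (Fin n) ℝ}
  {f : (Fin n → ℝ) → ℝ} {γ : ℝ → Fin n → ℝ}

lemma hasDerivAt_phaseField_of_geodesic (hγ : ContDiff ℝ 2 γ)
    (hgeo : ∀ s, covAccel g γ s = 0) {α : ℝ → ℝ} (hα : ∀ s, gGrad g f (γ s) = α s • deriv γ s)
    {σ ν : ℝ → ℝ} {t : ℝ} (hσ : HasDerivAt σ (ν t) t) (hν : HasDerivAt ν (α (σ t)) t) :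
    HasDerivAt (fun u => (γ (σ u), ν u • deriv γ (σ u)))
      (phaseField g f (γ (σ t), ν t • deriv γ (σ t))) t := by
  refine (((hγ.differentiable (by simp) (σ t)).hasDerivAt.scomp t hσ).prodMk
    (hasDerivAt_smul_deriv_comp hγ hσ hν)).congr_deriv ?_
  have hacc : deriv (deriv γ) (σ t) = -christoffelQuad g (γ (σ t)) (deriv γ (σ t)) :=
    eq_neg_of_add_eq_zero_left <|
      (covAccel_eq_add_christoffelQuad g γ (σ t)).symm.trans (hgeo (σ t))
  simp only [phaseField, christoffelQuad_smul, hα, hacc, smul_neg, sub_eq_add_neg]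

lemma gGrad_eq_smul_of_unit_speed (hunit : ∀ s, deriv γ s ⬝ᵥ g (γ s) *ᵥ deriv γ s = 1)
    (hb : ∀ s, ∃ β : ℝ, gGrad g f (γ s) = β • deriv γ s) (s : ℝ) :
    gGrad g f (γ s) = (deriv γ s ⬝ᵥ g (γ s) *ᵥ gGrad g f (γ s)) • deriv γ s := by
  obtain ⟨β, hβ⟩ := hb s
  rw [hβ, Matrix.mulVec_smul, dotProduct_smul, hunit s, smul_eq_mul, mul_one]

lemma contDiff_dotProduct_mulVec_gGrad (hU : IsOpen U)
    (hg : ∀ i j, ContDiffOn ℝ ∞ (fun x => g x i j) U) (hdet : ∀ x ∈ U, (g x).det ≠ 0)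
    (hf : ContDiffOn ℝ ∞ f U) (hγ : ContDiff ℝ 2 γ) (hγU : ∀ s, γ s ∈ U) :
    ContDiff ℝ 1 fun s => deriv γ s ⬝ᵥ g (γ s) *ᵥ gGrad g f (γ s) := by
  have hγ1 : ContDiff ℝ 1 γ := hγ.of_le (by norm_num)
  have hγ' : ContDiff ℝ 1 (deriv γ) := hγ.deriv'
  simp only [dotProduct, Matrix.mulVec]
  exact ContDiff.sum fun i _ => (contDiff_pi.mp hγ' i).mul <| ContDiff.sum fun j _ =>
    (((hg i j).of_le (by simp)).comp_contDiff hγ1 hγU).mul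
      (((contDiffOn_gGrad hU hg hdet hf j).of_le (by simp)).comp_contDiff hγ1 hγU)

section
variable (hU : IsOpen U) (hg : ∀ i j, ContDiffOn ℝ ∞ (fun x => g x i j) U)
  (hdet : ∀ x ∈ U, (g x).det ≠ 0) (hf : ContDiffOn ℝ ∞ f U) (hγ : ContDiff ℝ 2 γ)
  (hγU : ∀ s, γ s ∈ U) (hunit : ∀ s, deriv γ s ⬝ᵥ g (γ s) *ᵥ deriv γ s = 1)
  (hgeo : ∀ s, covAccel g γ s = 0) (hb : ∀ s, ∃ β : ℝ, gGrad g f (γ s) = β • deriv γ s)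
include hU hg hdet hf hγ hγU hunit hgeo hb

lemma IsSolutionOn.isOpen_setOf_mem_tangentBundleOf {q : ℝ → Fin n → ℝ} {I : Set ℝ}
    (hI : IsOpen I) (hq : IsSolutionOn g f U q I) :
    IsOpen {t | t ∈ I ∧ (q t, deriv q t) ∈ TangentBundleOf γ} := by
  refine isOpen_iff_mem_nhds.mpr ?_
  rintro t₁ ⟨ht₁, s₁, v₁, hx₁, hp₁⟩
  set α := fun s => deriv γ s ⬝ᵥ g (γ s) *ᵥ gGrad g f (γ s)
  have hG : ContDiff ℝ 1 fun z : ℝ × ℝ => (z.2, α z.1) :=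
    contDiff_snd.prodMk ((contDiff_dotProduct_mulVec_gGrad hU hg hdet hf hγ hγU).comp contDiff_fst)
  obtain ⟨z, hz₁, ε, hε, hz⟩ := (hG.contDiffAt (x := (s₁, v₁))
    ).exists_forall_mem_closedBall_exists_eq_forall_mem_Ioo_hasDerivAt₀ t₁
  set Y := fun u => (γ (z u).1, (z u).2 • deriv γ (z u).1)
  have hY : ∀ u ∈ Ioo (t₁ - ε) (t₁ + ε), HasDerivAt Y (phaseField g f (Y u)) u := fun u hu =>
    hasDerivAt_phaseField_of_geodesic hγ hgeo (gGrad_eq_smul_of_unit_speed hunit hb)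
      (hz u hu).fst (hz u hu).snd
  have hqY : (fun u => (q u, deriv q u)) =ᶠ[𝓝 t₁] Y :=
    (contDiffAt_phaseField hU hg hdet hf (hq.2.1 t₁ ht₁)).eventuallyEq_of_hasDerivAt
      (eventually_of_mem (hI.mem_nhds ht₁) fun u hu => hq.hasDerivAt_phaseField hI hu)
      (eventually_of_mem (Ioo_mem_nhds (by linarith) (by linarith)) hY)
      (Prod.ext (by simpa [Y, hz₁] using hx₁) (by simpa [Y, hz₁] using hp₁))
  filter_upwards [hqY, hI.mem_nhds ht₁] with u hu huI
  exact ⟨huI, (z u).1, (z u).2, congrArg Prod.fst hu, congrArg Prod.snd hu⟩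

theorem isStrictNormalMode_of_geodesic_of_tangent_gradient (hemb : IsClosedEmbedding γ) :
    IsStrictNormalMode g f U γ := by
  intro I hI hIc q hq t₀ ht₀ h₀ t ht
  have hTC : IsClosed (TangentBundleOf γ) := isClosed_tangentBundleOf hemb
    (hγ.continuous_deriv (by norm_num)) fun s => ne_zero_of_dotProduct_mulVec_eq_one (hunit s)
  have hclosure : closure {t | t ∈ I ∧ (q t, deriv q t) ∈ TangentBundleOf γ} ∩ I ⊆
      {t | t ∈ I ∧ (q t, deriv q t) ∈ TangentBundleOf γ} := by
    rintro u ⟨hu, huI⟩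
    have hcont := (hq.hasDerivAt_phaseField hI huI).continuousAt
    exact ⟨huI, hTC.closure_subset_iff.mpr (image_subset_iff.mpr fun _ hv => hv.2)
      (mem_closure_image (f := fun t => (q t, deriv q t)) hcont hu)⟩
  exact (hIc.isPreconnected.subset_of_closure_inter_subset
    (hq.isOpen_setOf_mem_tangentBundleOf hU hg hdet hf hγ hγU hunit hgeo hb hI)
    ⟨t₀, ht₀, ht₀, h₀⟩ hclosure ht).2

end

end Reverse

theorem strict_normal_mode_iff_geodesic_and_tangent_gradient_general
    {n : ℕ} (U : Set (Fin n → ℝ)) (hUopen : IsOpen U)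
    (g : (Fin n → ℝ) → Matrix (Fin n) (Fin n) ℝ)
    (hg : ∀ i j, ContDiffOn ℝ (⊤ : ℕ∞) (fun x => g x i j) U)
    (hgsymm : ∀ x ∈ U, (g x).IsSymm) (hgpos : ∀ x ∈ U, (g x).PosDef)
    (f : (Fin n → ℝ) → ℝ) (hf : ContDiffOn ℝ (⊤ : ℕ∞) f U)
    (γ : ℝ → Fin n → ℝ) (hγsmooth : ContDiff ℝ (⊤ : ℕ∞) γ) (hγU : ∀ s : ℝ, γ s ∈ U)
    (hγinj : Function.Injective γ) (hγproper : IsProperMap γ)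
    (hγunit : ∀ s : ℝ, deriv γ s ⬝ᵥ (g (γ s)) *ᵥ deriv γ s = 1) :
    IsStrictNormalMode g f U γ ↔
      (∀ s : ℝ, covAccel g γ s = 0) ∧
      (∀ s : ℝ, ∃ α : ℝ, gGrad g f (γ s) = α • deriv γ s) := by
  have hdet : ∀ x ∈ U, (g x).det ≠ 0 := fun x hx => (hgpos x hx).det_pos.ne'
  have hγ : ContDiff ℝ 2 γ := hγsmooth.of_le (by norm_cast)
  have hemb : IsClosedEmbedding γ := .of_continuous_injective_isClosedMap hγsmooth.continuous
    hγinj hγproper.isClosedMap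
  refine ⟨fun hNM => ?_, fun ⟨hgeo, hb⟩ => isStrictNormalMode_of_geodesic_of_tangent_gradient
    hUopen hg hdet hf hγ hγU hγunit hgeo hb hemb⟩
  have key (s v : ℝ) := hNM.exists_gGrad_eq hUopen hg hdet hf hγ hemb.isEmbedding (hγU s)
    (ne_zero_of_dotProduct_mulVec_eq_one (hγunit s)) v
  have hb (s : ℝ) : ∃ β : ℝ, gGrad g f (γ s) = β • deriv γ s := by simpa using key s 0
  refine ⟨fun s => ?_, hb⟩
  obtain ⟨c, hc⟩ := key s 1
  obtain ⟨β, hβ⟩ := hb s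
  have hD : covAccel g γ s = (β - c) • deriv γ s := by rw [sub_smul, ← hβ, hc]; simp
  have horth := covAccel_dotProduct_mulVec_deriv_eq_zero hγ.contDiffAt
    (fun i j => ((hg i j).contDiffAt (hUopen.mem_nhds (hγU s))).differentiableAt (by simp))
    (hgsymm _ (hγU s)) (hdet _ (hγU s)).isUnit hγunit
  rw [hD, smul_dotProduct, hγunit s, smul_eq_mul, mul_one] at horth
  rw [hD, horth, zero_smul]

/-- **Theorem 1.** A smooth, injective, proper, `g`-unit-speed curve `γ : ℝ → U` with image
`C = γ(ℝ)` is a strict normal mode of the dynamics `Dq̇ = ∇f(q)` if and only if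
(a) `γ` is a geodesic and (b) the gradient `∇f(γ(s))` lies in the span of `γ̇(s)` for all `s`. -/
theorem strict_normal_mode_iff_geodesic_and_tangent_gradient
    {n : ℕ} (hn : 1 ≤ n) (U : Set (Fin n → ℝ)) (hUopen : IsOpen U)
    (g : (Fin n → ℝ) → Matrix (Fin n) (Fin n) ℝ)
    (hg : ∀ i j, ContDiffOn ℝ (⊤ : ℕ∞) (fun x => g x i j) U)
    (hgsymm : ∀ x ∈ U, (g x).IsSymm) (hgpos : ∀ x ∈ U, (g x).PosDef)
    (f : (Fin n → ℝ) → ℝ) (hf : ContDiffOn ℝ (⊤ : ℕ∞) f U)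
    (γ : ℝ → Fin n → ℝ) (hγsmooth : ContDiff ℝ (⊤ : ℕ∞) γ) (hγU : ∀ s : ℝ, γ s ∈ U)
    (hγinj : Function.Injective γ) (hγproper : IsProperMap γ)
    (hγunit : ∀ s : ℝ, deriv γ s ⬝ᵥ (g (γ s)) *ᵥ deriv γ s = 1) :
    IsStrictNormalMode g f U γ ↔
      (∀ s : ℝ, covAccel g γ s = 0) ∧
      (∀ s : ℝ, ∃ α : ℝ, gGrad g f (γ s) = α • deriv γ s) :=
  strict_normal_mode_iff_geodesic_and_tangent_gradient_general U hUopen g hg hgsymm hgpos f hf γ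
    hγsmooth hγU hγinj hγproper hγunit
end

section
/- Let γ : ℝ → U be a smooth g-unit-speed geodesic and suppose there is a smooth function α : ℝ → ℝ such that ∇f(γ(s)) = α(s)·γ̇(s) for all s ∈ ℝ. Then for every s₀, v₀ ∈ ℝ there exist ε > 0 and a C² function σ : (−ε, ε) → ℝ with σ(0) = s₀ and σ̇(0) = v₀ such that the curve q := γ ∘ σ is a solution of the dynamics Dq̇ = ∇f(q). In particular, through every point of the tangent bundle of the curve there passes a solution of the dynamics that remains on the curve. -/
/-! Reparametrising a curve `q = γ ∘ σ` gives `Dq̇ = σ̈ γ̇ + σ̇² Dγ̇`. Along a geodesic the second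
term vanishes, and since `∇f = α γ̇` on the curve, the dynamics `Dq̇ = ∇f(q)` reduces to the scalar
equation `σ̈ = α(σ)`, which has a local solution with any initial data by Picard–Lindelöf. -/

open Matrix

open Set Filter Topology

theorem ContDiffAt.exists_forall_mem_Ioo_hasDerivAt_hasDerivAt
    {E : Type*} [NormedAddCommGroup E] [NormedSpace ℝ E] [CompleteSpace E]
    {α : E → E} {x₀ : E} (hα : ContDiffAt ℝ 1 α x₀) (v₀ : E) :
    ∃ ε > (0 : ℝ), ∃ x v : ℝ → E, x 0 = x₀ ∧ v 0 = v₀ ∧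
      ∀ t ∈ Ioo (-ε) ε, HasDerivAt x (v t) t ∧ HasDerivAt v (α (x t)) t := by
  have hV : ContDiffAt ℝ 1 (fun p : E × E => (p.2, α p.1)) (x₀, v₀) :=
    contDiffAt_snd.prodMk (hα.comp _ contDiffAt_fst)
  obtain ⟨p, hp0, ε, hε, hp⟩ :=
    hV.exists_forall_mem_closedBall_exists_eq_forall_mem_Ioo_hasDerivAt₀ 0
  refine ⟨ε, hε, fun t => (p t).1, fun t => (p t).2, by simp [hp0], by simp [hp0], fun t ht => ?_⟩
  have hpt := hp t (by simpa using ht)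
  exact ⟨hpt.fst, hpt.snd⟩

theorem contDiffOn_two_of_hasDerivAt {F : Type*} [NormedAddCommGroup F] [NormedSpace ℝ F]
    {s : Set ℝ} (hs : IsOpen s) {x v a : ℝ → F}
    (hx : ∀ t ∈ s, HasDerivAt x (v t) t) (hv : ∀ t ∈ s, HasDerivAt v (a t) t)
    (ha : ContinuousOn a s) : ContDiffOn ℝ 2 x s := by
  have hv1 : ContDiffOn ℝ 1 v s := by
    rw [show (1 : WithTop ℕ∞) = 0 + 1 from rfl, contDiffOn_succ_iff_deriv_of_isOpen hs]
    exact ⟨fun t ht => (hv t ht).differentiableAt.differentiableWithinAt, by simp,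
      contDiffOn_zero.mpr (ha.congr fun t ht => (hv t ht).deriv)⟩
  rw [show (2 : WithTop ℕ∞) = 1 + 1 from rfl, contDiffOn_succ_iff_deriv_of_isOpen hs]
  exact ⟨fun t ht => (hx t ht).differentiableAt.differentiableWithinAt, by simp,
    hv1.congr fun t ht => (hx t ht).deriv⟩

theorem covAccel_comp_s3 {n : ℕ} (g : (Fin n → ℝ) → Matrix (Fin n) (Fin n) ℝ)
    {γ : ℝ → Fin n → ℝ} {σ σ' : ℝ → ℝ} {σ'' t : ℝ}
    (hγ : Differentiable ℝ γ) (hγ' : DifferentiableAt ℝ (deriv γ) (σ t))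
    (hσ : ∀ᶠ τ in 𝓝 t, HasDerivAt σ (σ' τ) τ) (hσ' : HasDerivAt σ' σ'' t) :
    covAccel g (fun τ => γ (σ τ)) t =
      σ'' • deriv γ (σ t) + σ' t ^ 2 • covAccel g γ (σ t) := by
  have hvel : deriv (fun τ => γ (σ τ)) =ᶠ[𝓝 t] fun τ => σ' τ • deriv γ (σ τ) :=
    hσ.mono fun τ hτ => ((hγ (σ τ)).hasDerivAt.scomp τ hτ).deriv
  have hacc : deriv (deriv fun τ => γ (σ τ)) t =
      σ'' • deriv γ (σ t) + σ' t ^ 2 • deriv (deriv γ) (σ t) := by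
    have hd : HasDerivAt (fun τ => σ' τ • deriv γ (σ τ))
        (σ' t • σ' t • deriv (deriv γ) (σ t) + σ'' • deriv γ (σ t)) t :=
      hσ'.smul (hγ'.hasDerivAt.scomp t hσ.self_of_nhds)
    rw [hvel.deriv_eq, hd.deriv, smul_smul, sq, add_comm]
  funext k
  simp only [covAccel, hacc, hvel.self_of_nhds, Pi.add_apply, Pi.smul_apply, smul_eq_mul,
    mul_add, Finset.mul_sum, add_assoc]
  congr 2
  exact Finset.sum_congr rfl fun i _ => Finset.sum_congr rfl fun j _ => by ring

theorem exists_local_solution_on_strict_mode_general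
    {n : ℕ}
    (g : (Fin n → ℝ) → Matrix (Fin n) (Fin n) ℝ)
    (f : (Fin n → ℝ) → ℝ)
    (γ : ℝ → Fin n → ℝ) (hγsmooth : ContDiff ℝ (⊤ : ℕ∞) γ)
    (hγgeo : ∀ s : ℝ, covAccel g γ s = 0)
    (α : ℝ → ℝ) (hα : ContDiff ℝ (⊤ : ℕ∞) α)
    (hgrad : ∀ s : ℝ, gGrad g f (γ s) = α s • deriv γ s) :
    ∀ s₀ v₀ : ℝ, ∃ ε > (0 : ℝ), ∃ σ : ℝ → ℝ,
      ContDiffOn ℝ 2 σ (Set.Ioo (-ε) ε) ∧ σ 0 = s₀ ∧ deriv σ 0 = v₀ ∧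
      ∀ t ∈ Set.Ioo (-ε) ε,
        covAccel g (fun τ => γ (σ τ)) t = gGrad g f (γ (σ t)) := by
  intro s₀ v₀
  have hα₁ : ContDiffAt ℝ 1 α s₀ := hα.contDiffAt.of_le (by exact_mod_cast le_top)
  obtain ⟨ε, hε, σ, σ', hσ₀, hσ'₀, hσ⟩ := hα₁.exists_forall_mem_Ioo_hasDerivAt_hasDerivAt v₀
  have hγ : Differentiable ℝ γ := hγsmooth.differentiable (by simp)
  have hγ' : Differentiable ℝ (deriv γ) :=
    (contDiff_infty_iff_deriv.mp hγsmooth).2.differentiable (by simp)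
  have hσcont : ContinuousOn σ (Ioo (-ε) ε) := fun t ht =>
    (hσ t ht).1.continuousAt.continuousWithinAt
  refine ⟨ε, hε, σ, contDiffOn_two_of_hasDerivAt isOpen_Ioo (fun t ht => (hσ t ht).1)
    (fun t ht => (hσ t ht).2) (hα.continuous.comp_continuousOn hσcont), hσ₀,
    (hσ 0 ⟨neg_lt_zero.mpr hε, hε⟩).1.deriv.trans hσ'₀, fun t ht => ?_⟩
  have hσt : ∀ᶠ τ in 𝓝 t, HasDerivAt σ (σ' τ) τ :=
    eventually_of_mem (isOpen_Ioo.mem_nhds ht) fun τ hτ => (hσ τ hτ).1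
  rw [covAccel_comp_s3 g hγ (hγ' _) hσt (hσ t ht).2, hγgeo, hgrad, smul_zero, add_zero]

/-- Along a `g`-unit-speed geodesic `γ` whose tangential potential gradient is
`∇f(γ(s)) = α(s)·γ̇(s)`, through every point `(s₀, v₀)` of the tangent bundle of the curve
there passes a local `C²` solution `q = γ ∘ σ` of the dynamics `Dq̇ = ∇f(q)`
remaining on the curve. -/
theorem exists_local_solution_on_strict_mode
    {n : ℕ} (hn : 1 ≤ n) (U : Set (Fin n → ℝ)) (hUopen : IsOpen U)
    (g : (Fin n → ℝ) → Matrix (Fin n) (Fin n) ℝ)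
    (hg : ∀ i j, ContDiffOn ℝ (⊤ : ℕ∞) (fun x => g x i j) U)
    (hgsymm : ∀ x ∈ U, (g x).IsSymm) (hgpos : ∀ x ∈ U, (g x).PosDef)
    (f : (Fin n → ℝ) → ℝ) (hf : ContDiffOn ℝ (⊤ : ℕ∞) f U)
    (γ : ℝ → Fin n → ℝ) (hγsmooth : ContDiff ℝ (⊤ : ℕ∞) γ) (hγU : ∀ s : ℝ, γ s ∈ U)
    (hγunit : ∀ s : ℝ, deriv γ s ⬝ᵥ (g (γ s)) *ᵥ deriv γ s = 1)
    (hγgeo : ∀ s : ℝ, covAccel g γ s = 0)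
    (α : ℝ → ℝ) (hα : ContDiff ℝ (⊤ : ℕ∞) α)
    (hgrad : ∀ s : ℝ, gGrad g f (γ s) = α s • deriv γ s) :
    ∀ s₀ v₀ : ℝ, ∃ ε > (0 : ℝ), ∃ σ : ℝ → ℝ,
      ContDiffOn ℝ 2 σ (Set.Ioo (-ε) ε) ∧ σ 0 = s₀ ∧ deriv σ 0 = v₀ ∧
      ∀ t ∈ Set.Ioo (-ε) ε,
        covAccel g (fun τ => γ (σ τ)) t = gGrad g f (γ (σ t)) :=
  exists_local_solution_on_strict_mode_general g f γ hγsmooth hγgeo α hα hgrad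
end
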